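/- The Balsara MHD vortex satisfies the steady MHD momentum equations: with the fields below and total pressure p_t = p + (B₁² + B₂²)/(8π), at every point (x,y) ∈ ℝ² one has ∂_x(ρu² + p_t − B₁²/(4π)) + ∂_y(ρuv − B₁B₂/(4π)) = 0 and ∂_x(ρuv − B₁B₂/(4π)) + ∂_y(ρv² + p_t − B₂²/(4π)) = 0. -/

import Mathlib

open Real

/-- Squared distance from the vortex center `(5,5)`. -/
noncomputable def mhdR2 (x y : ℝ) : ℝ := (x - 5)^2 + (y - 5)^2

/-- `x`-velocity of the Balsara MHD vortex. -/
noncomputable def mhdU (κ q x y : ℝ) : ℝ :=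
  -(κ / (2 * π)) * exp (q * (1 - mhdR2 x y)) * (y - 5)

/-- `y`-velocity of the Balsara MHD vortex. -/
noncomputable def mhdV (κ q x y : ℝ) : ℝ :=
  (κ / (2 * π)) * exp (q * (1 - mhdR2 x y)) * (x - 5)

/-- `x`-component of the magnetic field of the Balsara MHD vortex. -/
noncomputable def mhdB1 (μ q x y : ℝ) : ℝ :=
  -(μ / (2 * π)) * exp (q * (1 - mhdR2 x y)) * (y - 5)

/-- `y`-component of the magnetic field of the Balsara MHD vortex. -/
noncomputable def mhdB2 (μ q x y : ℝ) : ℝ :=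
  (μ / (2 * π)) * exp (q * (1 - mhdR2 x y)) * (x - 5)

/-- Hydrodynamic pressure of the Balsara MHD vortex. -/
noncomputable def mhdP (κ μ q x y : ℝ) : ℝ :=
  1 + (1 / (64 * q * π^3)) * (μ^2 * (1 - 2 * q * mhdR2 x y) - 4 * π * κ^2)
        * exp (2 * q * (1 - mhdR2 x y))

/-- Total pressure `p_t = p + |B|²/(8π)` of the Balsara MHD vortex. -/
noncomputable def mhdPt (κ μ q x y : ℝ) : ℝ :=
  mhdP κ μ q x y + ((mhdB1 μ q x y)^2 + (mhdB2 μ q x y)^2) / (8 * π)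

set_option linter.unusedTactic false in
set_option linter.unreachableTactic false in
lemma hasDerivAt_mhd_aux (q a c0 c1 c2 c3 x : ℝ) :
    HasDerivAt (fun t : ℝ => c0 + (c1 + c2*(t-5)^2 + c3*(t-5)) *
        Real.exp (2*q*(1-((t-5)^2+a))))
      ((2*c2*(x-5) + c3 + (c1 + c2*(x-5)^2 + c3*(x-5)) * (2*q*(-(2*(x-5)))))
        * Real.exp (2*q*(1-((x-5)^2+a)))) x := by
  have hs : HasDerivAt (fun t : ℝ => t - 5) 1 x := (hasDerivAt_id x).sub_const 5
  have hsq : HasDerivAt (fun t : ℝ => (t-5)^2) (2*(x-5)) x := by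
    simpa using hs.fun_pow 2
  have hin : HasDerivAt (fun t : ℝ => 2*q*(1-((t-5)^2+a))) (2*q*(-(2*(x-5)))) x := by
    have h1 := ((hsq.add_const a).const_sub 1).const_mul (2*q)
    convert h1 using 1 <;> ring
  have hexp := hin.exp
  have hpoly : HasDerivAt (fun t : ℝ => c1 + c2*(t-5)^2 + c3*(t-5)) (2*c2*(x-5) + c3) x := by
    have h2 := ((hsq.const_mul c2).const_add c1).fun_add (hs.const_mul c3)
    exact h2.congr_deriv (by ring)
  have h3 := (hpoly.fun_mul hexp).const_add c0
  exact h3.congr_deriv (by ring)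

set_option maxHeartbeats 1600000 in
/-- The Balsara MHD vortex (with density `ρ = 1`) satisfies the steady ideal-MHD
momentum equations
`∂_x(ρu² + p_t − B₁²/(4π)) + ∂_y(ρuv − B₁B₂/(4π)) = 0` and
`∂_x(ρuv − B₁B₂/(4π)) + ∂_y(ρv² + p_t − B₂²/(4π)) = 0` at every point. -/
theorem mhd_vortex_momentum (κ μ q : ℝ) (hq : q ≠ 0) (x y : ℝ) :
    (deriv (fun x' => (1 : ℝ) * (mhdU κ q x' y)^2 + mhdPt κ μ q x' y
        - (mhdB1 μ q x' y)^2 / (4 * π)) x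
      + deriv (fun y' => (1 : ℝ) * mhdU κ q x y' * mhdV κ q x y'
        - mhdB1 μ q x y' * mhdB2 μ q x y' / (4 * π)) y = 0)
    ∧
    (deriv (fun x' => (1 : ℝ) * mhdU κ q x' y * mhdV κ q x' y
        - mhdB1 μ q x' y * mhdB2 μ q x' y / (4 * π)) x
      + deriv (fun y' => (1 : ℝ) * (mhdV κ q x y')^2 + mhdPt κ μ q x y'
        - (mhdB2 μ q x y')^2 / (4 * π)) y = 0) := by
  have hπ : (π : ℝ) ≠ 0 := Real.pi_ne_zero
  -- abbreviations for the coefficients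
  set A := (y - 5)^2 with hA
  set S := (x - 5)^2 with hS
  -- coefficients for F1 = u² + pt - B1²/(4π) as a function of x'
  set d1 : ℝ := κ^2*A/(4*π^2) + (μ^2*(1 - 2*q*A) - 4*π*κ^2)/(64*q*π^3) - μ^2*A/(32*π^3)
    with hd1
  set d2 : ℝ := -(2*q*μ^2)/(64*q*π^3) + μ^2/(32*π^3) with hd2
  -- coefficient for F2 = uv - B1B2/(4π) as a function of y'
  set d3 : ℝ := (x-5)*(-(κ^2/(4*π^2)) + μ^2/(16*π^3)) with hd3
  -- coefficient for G1 = uv - B1B2/(4π) as a function of x'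
  set d4 : ℝ := (y-5)*(-(κ^2/(4*π^2)) + μ^2/(16*π^3)) with hd4
  -- coefficients for G2 = v² + pt - B2²/(4π) as a function of y'
  set d5 : ℝ := κ^2*S/(4*π^2) + (μ^2*(1 - 2*q*S) - 4*π*κ^2)/(64*q*π^3) - μ^2*S/(32*π^3)
    with hd5
  have hexp2 : ∀ R : ℝ, Real.exp (2*q*(1-R)) = Real.exp (q*(1-R)) * Real.exp (q*(1-R)) := by
    intro R; rw [← Real.exp_add]; congr 1; ring
  have eF1 : (fun x' => (1 : ℝ) * (mhdU κ q x' y)^2 + mhdPt κ μ q x' y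
        - (mhdB1 μ q x' y)^2 / (4 * π))
      = (fun t : ℝ => 1 + (d1 + d2*(t-5)^2 + 0*(t-5)) * Real.exp (2*q*(1-((t-5)^2+A)))) := by
    funext t
    simp only [mhdU, mhdV, mhdB1, mhdB2, mhdPt, mhdP, mhdR2, hd1, hd2, hA]
    rw [hexp2]
    field_simp
    ring
  have eF2 : (fun y' => (1 : ℝ) * mhdU κ q x y' * mhdV κ q x y'
        - mhdB1 μ q x y' * mhdB2 μ q x y' / (4 * π))
      = (fun t : ℝ => 0 + (0 + 0*(t-5)^2 + d3*(t-5)) * Real.exp (2*q*(1-((t-5)^2+S)))) := by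
    funext t
    simp only [mhdU, mhdV, mhdB1, mhdB2, mhdR2, hd3, hS]
    rw [hexp2]
    field_simp
    ring
  have eG1 : (fun x' => (1 : ℝ) * mhdU κ q x' y * mhdV κ q x' y
        - mhdB1 μ q x' y * mhdB2 μ q x' y / (4 * π))
      = (fun t : ℝ => 0 + (0 + 0*(t-5)^2 + d4*(t-5)) * Real.exp (2*q*(1-((t-5)^2+A)))) := by
    funext t
    simp only [mhdU, mhdV, mhdB1, mhdB2, mhdR2, hd4, hA]
    rw [hexp2]
    field_simp
    ring
  have eG2 : (fun y' => (1 : ℝ) * (mhdV κ q x y')^2 + mhdPt κ μ q x y'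
        - (mhdB2 μ q x y')^2 / (4 * π))
      = (fun t : ℝ => 1 + (d5 + d2*(t-5)^2 + 0*(t-5)) * Real.exp (2*q*(1-((t-5)^2+S)))) := by
    funext t
    simp only [mhdU, mhdV, mhdB1, mhdB2, mhdPt, mhdP, mhdR2, hd5, hd2, hS]
    rw [show ((x-5:ℝ))^2+(t-5)^2 = (t-5)^2+(x-5)^2 from by ring, hexp2]
    field_simp
    ring
  have hE : Real.exp (2*q*(1-((y-5)^2+S))) = Real.exp (2*q*(1-((x-5)^2+A))) := by
    rw [hA, hS]; congr 1; ring
  rw [eF1, eF2, eG1, eG2,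
    (hasDerivAt_mhd_aux q A 1 d1 d2 0 x).deriv,
    (hasDerivAt_mhd_aux q S 0 0 0 d3 y).deriv,
    (hasDerivAt_mhd_aux q A 0 0 0 d4 x).deriv,
    (hasDerivAt_mhd_aux q S 1 d5 d2 0 y).deriv, hE]
  constructor
  · rw [← add_mul, mul_eq_zero]
    left
    simp only [hd1, hd2, hd3, hA, hS]
    field_simp
    ring
  · rw [← add_mul, mul_eq_zero]
    left
    simp only [hd4, hd5, hd2, hA, hS]
    field_simp
    ring
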